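/- arXiv:math/0209260 — 3 statements merged into one kernel-verified Lean document; each statement's English description precedes it below -/
import Mathlib

section
/- Let N ≥ 1, let a_1, …, a_N be pairwise distinct real numbers, and let r ∈ ℝ with r ∉ {a_1, …, a_N}. Then for all p, q ∈ ℝ^N one has the identity (∑_{j=1}^N p_j q_j/(r − a_j))^2 − (∑_{j=1}^N q_j^2/(r − a_j)) · (∑_{j=1}^N p_j^2/(r − a_j)) = ∑_{j=1}^N F_j(p,q)/(r − a_j). -/
/-!
Expanding the left-hand side gives a double sum over pairs `(j, k)` whose diagonal terms vanish.
After symmetrising in `j ↔ k`, each off-diagonal pair contributes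
`-(p_k q_j - p_j q_k)^2 / ((r - a_j)(r - a_k))`. The partial fraction decomposition
`1 / ((r - a_j)(r - a_k)) = (1 / (r - a_k) - 1 / (r - a_j)) / (a_k - a_j)` splits this into
the `j`-th and the `k`-th term of `∑_j F_j(p,q) / (r - a_j)`.
-/

open Finset

/-- The Gaudin function `F_j(p,q) = ∑_{k ≠ j} (p_k q_j − p_j q_k)^2/(a_k − a_j)`. -/
noncomputable def gaudinF (N : ℕ) (a : Fin N → ℝ) (j : Fin N)
    (p q : Fin N → ℝ) : ℝ :=
  ∑ k ∈ Finset.univ.erase j, (p k * q j - p j * q k) ^ 2 / (a k - a j)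

theorem Finset.sum_sum_eq_of_add_swap_eq {ι M : Type*} [Fintype ι] [AddCommMonoid M]
    [IsAddTorsionFree M] {f g : ι → ι → M} (h : ∀ j k, f j k + f k j = g j k + g k j) :
    ∑ j, ∑ k, f j k = ∑ j, ∑ k, g j k := by
  have symm_sum (f : ι → ι → M) : 2 • ∑ j, ∑ k, f j k = ∑ j, ∑ k, (f j k + f k j) := by
    rw [two_nsmul]
    nth_rewrite 2 [sum_comm]
    simp only [← sum_add_distrib]
  apply IsAddTorsionFree.nsmul_right_injective two_ne_zero
  simp only [symm_sum, h]

theorem gaudin_pair_identity {K : Type*} [Field K] {r x y : K} (hx : r ≠ x) (hy : r ≠ y)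
    (hxy : x ≠ y) (u v s t : K) :
    u * v / (r - x) * (s * t / (r - y)) - v ^ 2 / (r - x) * (s ^ 2 / (r - y))
      + (s * t / (r - y) * (u * v / (r - x)) - t ^ 2 / (r - y) * (u ^ 2 / (r - x)))
      = (s * v - u * t) ^ 2 / (y - x) / (r - x) + (u * t - s * v) ^ 2 / (x - y) / (r - y) := by
  have := sub_ne_zero.2 hx
  have := sub_ne_zero.2 hy
  have := sub_ne_zero.2 hxy
  have := sub_ne_zero.2 hxy.symm
  field_simp
  ring

theorem stmt0_general (N : ℕ) (a : Fin N → ℝ)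
    (ha : Function.Injective a) (r : ℝ) (hr : ∀ j, r ≠ a j)
    (p q : Fin N → ℝ) :
    (∑ j, p j * q j / (r - a j)) ^ 2
      - (∑ j, (q j) ^ 2 / (r - a j)) * (∑ j, (p j) ^ 2 / (r - a j))
      = ∑ j, gaudinF N a j p q / (r - a j) := by
  set g : Fin N → Fin N → ℝ := fun j k => (p k * q j - p j * q k) ^ 2 / (a k - a j) / (r - a j)
  have rhs_eq (j : Fin N) : gaudinF N a j p q / (r - a j) = ∑ k, g j k := by
    rw [gaudinF, sum_div]
    exact sum_erase univ (f := g j) (by simp [g])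
  rw [sq, sum_mul_sum, sum_mul_sum, ← sum_sub_distrib]
  simp only [← sum_sub_distrib, rhs_eq]
  refine sum_sum_eq_of_add_swap_eq fun j k => ?_
  obtain rfl | hjk := eq_or_ne j k
  · ring
  · exact gaudin_pair_identity (hr j) (hr k) (ha.ne hjk) _ _ _ _

theorem stmt0 (N : ℕ) (hN : 1 ≤ N) (a : Fin N → ℝ)
    (ha : Function.Injective a) (r : ℝ) (hr : ∀ j, r ≠ a j)
    (p q : Fin N → ℝ) :
    (∑ j, p j * q j / (r - a j)) ^ 2
      - (∑ j, (q j) ^ 2 / (r - a j)) * (∑ j, (p j) ^ 2 / (r - a j))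
      = ∑ j, gaudinF N a j p q / (r - a j) :=
  stmt0_general N a ha r hr p q
end

section
/- Let N ≥ 1, let a_1, …, a_N be pairwise distinct real numbers, and let r, s ∈ ℝ ∖ {a_1, …, a_N}. Define H_r(p,q) = (∑_{j=1}^N p_j q_j/(r − a_j))^2 − (∑_{j=1}^N q_j^2/(r − a_j)) · (∑_{j=1}^N p_j^2/(r − a_j)), and likewise H_s. Then the standard Poisson bracket satisfies {H_r, H_s}(p,q) = 0 for all (p,q) ∈ ℝ^N × ℝ^N (the classical sl(2) Gaudin Hamiltonians are in involution). -/
/-!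
Write `w_j = (r - a_j)⁻¹`, `v_j = (s - a_j)⁻¹` and `A_w = ∑ w_j p_j q_j`, `B_w = ∑ w_j q_j²`,
`C_w = ∑ w_j p_j²`, so that `H_r = A_w² - B_w C_w`. A direct computation gives
`{H_w, H_v} = 4 ∑_j w_j v_j (…)`, a combination of `A_{wv}`, `B_{wv}`, `C_{wv}` with coefficients
quadratic in `A, B, C` at `w` and `v`. By partial fractions `w_j v_j = (w_j - v_j) / (s - r)`, so
`A_{wv} = (A_w - A_v) / (s - r)` and likewise for `B`, `C`; after this substitution the bracket
vanishes identically.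
-/

open Finset

/-- Partial derivative `∂f/∂p_j` of a function on `ℝ^N × ℝ^N`. -/
noncomputable def pdP {N : ℕ} (f : (Fin N → ℝ) × (Fin N → ℝ) → ℝ) (j : Fin N)
    (x : (Fin N → ℝ) × (Fin N → ℝ)) : ℝ :=
  fderiv ℝ f x (Pi.single j 1, 0)

/-- Partial derivative `∂f/∂q_j` of a function on `ℝ^N × ℝ^N`. -/
noncomputable def pdQ {N : ℕ} (f : (Fin N → ℝ) × (Fin N → ℝ) → ℝ) (j : Fin N)
    (x : (Fin N → ℝ) × (Fin N → ℝ)) : ℝ :=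
  fderiv ℝ f x (0, Pi.single j 1)

/-- The standard Poisson bracket on `ℝ^N × ℝ^N`. -/
noncomputable def stdPoisson {N : ℕ}
    (f g : (Fin N → ℝ) × (Fin N → ℝ) → ℝ)
    (x : (Fin N → ℝ) × (Fin N → ℝ)) : ℝ :=
  ∑ j, (pdP f j x * pdQ g j x - pdQ f j x * pdP g j x)

/-- The classical `sl(2)` Gaudin Hamiltonian
`H_r(p,q) = (∑ p_j q_j/(r−a_j))² − (∑ q_j²/(r−a_j))(∑ p_j²/(r−a_j))`. -/
noncomputable def gaudinH (N : ℕ) (a : Fin N → ℝ) (r : ℝ)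
    (x : (Fin N → ℝ) × (Fin N → ℝ)) : ℝ :=
  (∑ j, x.1 j * x.2 j / (r - a j)) ^ 2
    - (∑ j, (x.2 j) ^ 2 / (r - a j)) * (∑ j, (x.1 j) ^ 2 / (r - a j))

theorem inv_sub_mul_inv_sub {a r s : ℝ} (hr : r ≠ a) (hs : s ≠ a) (hrs : r ≠ s) :
    (r - a)⁻¹ * (s - a)⁻¹ = (s - r)⁻¹ * ((r - a)⁻¹ - (s - a)⁻¹) := by
  have := sub_ne_zero.2 hr
  have := sub_ne_zero.2 hs
  have := sub_ne_zero.2 hrs.symm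
  field_simp
  ring

section

variable {N : ℕ}

def weightedDot (w u v : Fin N → ℝ) : ℝ := ∑ j, w j * (u j * v j)

variable {E : Type*} [NormedAddCommGroup E] [NormedSpace ℝ E]

theorem DifferentiableAt.weightedDot (w : Fin N → ℝ) {f g : E → Fin N → ℝ} {x : E}
    (hf : DifferentiableAt ℝ f x) (hg : DifferentiableAt ℝ g x) :
    DifferentiableAt ℝ (fun y => weightedDot w (f y) (g y)) x := by
  unfold _root_.weightedDot
  fun_prop

theorem fderiv_weightedDot_apply (w : Fin N → ℝ) {f g : E → Fin N → ℝ} {x : E}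
    (hf : DifferentiableAt ℝ f x) (hg : DifferentiableAt ℝ g x) (d : E) :
    fderiv ℝ (fun y => weightedDot w (f y) (g y)) x d =
      weightedDot w (fderiv ℝ f x d) (g x) + weightedDot w (f x) (fderiv ℝ g x d) := by
  unfold _root_.weightedDot
  simp (disch := fun_prop) only [fderiv_fun_sum, fderiv_const_mul, fderiv_fun_mul, fderiv_apply]
  simp only [smul_add, _root_.sum_apply, add_apply, smul_apply, ContinuousLinearMap.comp_apply,
    ContinuousLinearMap.proj_apply, smul_eq_mul, ← sum_add_distrib]
  exact sum_congr rfl fun j _ => by ring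

@[simp] theorem weightedDot_zero_left (w v : Fin N → ℝ) : weightedDot w 0 v = 0 := by
  simp [weightedDot]

@[simp] theorem weightedDot_zero_right (w u : Fin N → ℝ) : weightedDot w u 0 = 0 := by
  simp [weightedDot]

@[simp] theorem weightedDot_single_left (w v : Fin N → ℝ) (k : Fin N) :
    weightedDot w (Pi.single k 1) v = w k * v k := by
  simp [weightedDot, Pi.single_apply]

@[simp] theorem weightedDot_single_right (w u : Fin N → ℝ) (k : Fin N) :
    weightedDot w u (Pi.single k 1) = w k * u k := by
  simp [weightedDot, Pi.single_apply]

theorem weightedDot_smul_sub_left (c : ℝ) (w v u u' : Fin N → ℝ) :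
    weightedDot (c • (w - v)) u u' = c * (weightedDot w u u' - weightedDot v u u') := by
  simp only [weightedDot, Pi.smul_apply, Pi.sub_apply, smul_eq_mul, mul_sub, mul_sum,
    ← sum_sub_distrib]
  exact sum_congr rfl fun j _ => by ring

def weightedGaudinH (w : Fin N → ℝ) (x : (Fin N → ℝ) × (Fin N → ℝ)) : ℝ :=
  weightedDot w x.1 x.2 ^ 2 - weightedDot w x.2 x.2 * weightedDot w x.1 x.1

theorem gaudinH_eq_weightedGaudinH (a : Fin N → ℝ) (r : ℝ) :
    gaudinH N a r = weightedGaudinH (fun j => (r - a j)⁻¹) := by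
  funext x
  simp only [gaudinH, weightedGaudinH, weightedDot, div_eq_inv_mul, sq]

theorem fderiv_weightedGaudinH_apply (w : Fin N → ℝ) (x d : (Fin N → ℝ) × (Fin N → ℝ)) :
    fderiv ℝ (weightedGaudinH w) x d =
      2 * weightedDot w x.1 x.2 * (weightedDot w d.1 x.2 + weightedDot w x.1 d.2)
        - ((weightedDot w d.2 x.2 + weightedDot w x.2 d.2) * weightedDot w x.1 x.1
          + weightedDot w x.2 x.2 * (weightedDot w d.1 x.1 + weightedDot w x.1 d.1)) := by
  have hfst : DifferentiableAt ℝ (fun y : (Fin N → ℝ) × (Fin N → ℝ) => y.1) x := by fun_prop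
  have hsnd : DifferentiableAt ℝ (fun y : (Fin N → ℝ) × (Fin N → ℝ) => y.2) x := by fun_prop
  have h12 := hfst.weightedDot w hsnd
  have h22 := hsnd.weightedDot w hsnd
  have h11 := hfst.weightedDot w hfst
  unfold weightedGaudinH
  rw [fderiv_fun_sub (h12.fun_pow 2) (h22.fun_mul h11), sub_apply, fderiv_fun_pow _ h12,
    fderiv_fun_mul h22 h11]
  simp only [smul_apply, add_apply, smul_eq_mul, fderiv_weightedDot_apply w hfst hsnd,
    fderiv_weightedDot_apply w hsnd hsnd, fderiv_weightedDot_apply w hfst hfst, fderiv_fst,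
    fderiv_snd, ContinuousLinearMap.coe_fst', ContinuousLinearMap.coe_snd']
  ring

theorem pdP_weightedGaudinH (w : Fin N → ℝ) (k : Fin N) (x : (Fin N → ℝ) × (Fin N → ℝ)) :
    pdP (weightedGaudinH w) k x =
      2 * w k * (weightedDot w x.1 x.2 * x.2 k - weightedDot w x.2 x.2 * x.1 k) := by
  rw [pdP, fderiv_weightedGaudinH_apply]
  simp only [weightedDot_single_left, weightedDot_zero_left, weightedDot_zero_right,
    weightedDot_single_right]
  ring

theorem pdQ_weightedGaudinH (w : Fin N → ℝ) (k : Fin N) (x : (Fin N → ℝ) × (Fin N → ℝ)) :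
    pdQ (weightedGaudinH w) k x =
      2 * w k * (weightedDot w x.1 x.2 * x.1 k - weightedDot w x.1 x.1 * x.2 k) := by
  rw [pdQ, fderiv_weightedGaudinH_apply]
  simp only [weightedDot_single_left, weightedDot_zero_left, weightedDot_zero_right,
    weightedDot_single_right]
  ring

theorem stdPoisson_weightedGaudinH (w v : Fin N → ℝ) (x : (Fin N → ℝ) × (Fin N → ℝ)) :
    stdPoisson (weightedGaudinH w) (weightedGaudinH v) x =
      4 * ((weightedDot w x.1 x.1 * weightedDot v x.1 x.2
              - weightedDot w x.1 x.2 * weightedDot v x.1 x.1) * weightedDot (w * v) x.2 x.2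
        + (weightedDot w x.1 x.2 * weightedDot v x.2 x.2
              - weightedDot w x.2 x.2 * weightedDot v x.1 x.2) * weightedDot (w * v) x.1 x.1
        + (weightedDot w x.2 x.2 * weightedDot v x.1 x.1
              - weightedDot w x.1 x.1 * weightedDot v x.2 x.2) * weightedDot (w * v) x.1 x.2) := by
  simp only [stdPoisson, pdP_weightedGaudinH, pdQ_weightedGaudinH]
  generalize weightedDot w x.1 x.2 = Aw, weightedDot w x.2 x.2 = Bw, weightedDot w x.1 x.1 = Cw,
    weightedDot v x.1 x.2 = Av, weightedDot v x.2 x.2 = Bv, weightedDot v x.1 x.1 = Cv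
  simp only [weightedDot, Pi.mul_apply, mul_sum, ← sum_add_distrib]
  exact sum_congr rfl fun k _ => by ring

theorem stdPoisson_weightedGaudinH_eq_zero_of_mul_eq {w v : Fin N → ℝ} {c : ℝ}
    (hwv : w * v = c • (w - v)) (x : (Fin N → ℝ) × (Fin N → ℝ)) :
    stdPoisson (weightedGaudinH w) (weightedGaudinH v) x = 0 := by
  rw [stdPoisson_weightedGaudinH, hwv, weightedDot_smul_sub_left, weightedDot_smul_sub_left,
    weightedDot_smul_sub_left]
  ring

theorem stdPoisson_self (f : (Fin N → ℝ) × (Fin N → ℝ) → ℝ) (x : (Fin N → ℝ) × (Fin N → ℝ)) :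
    stdPoisson f f x = 0 :=
  sum_eq_zero fun j _ => by ring

end

theorem stmt4_general (N : ℕ) (a : Fin N → ℝ)
    (r s : ℝ) (hr : ∀ j, r ≠ a j) (hs : ∀ j, s ≠ a j) :
    ∀ x : (Fin N → ℝ) × (Fin N → ℝ),
      stdPoisson (gaudinH N a r) (gaudinH N a s) x = 0 := by
  intro x
  obtain rfl | hrs := eq_or_ne r s
  · exact stdPoisson_self _ x
  have partial_fractions : (fun j => (r - a j)⁻¹) * (fun j => (s - a j)⁻¹) =
      (s - r)⁻¹ • ((fun j => (r - a j)⁻¹) - fun j => (s - a j)⁻¹) :=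
    funext fun j => inv_sub_mul_inv_sub (hr j) (hs j) hrs
  rw [gaudinH_eq_weightedGaudinH, gaudinH_eq_weightedGaudinH]
  exact stdPoisson_weightedGaudinH_eq_zero_of_mul_eq partial_fractions x

theorem stmt4 (N : ℕ) (hN : 1 ≤ N) (a : Fin N → ℝ) (ha : Function.Injective a)
    (r s : ℝ) (hr : ∀ j, r ≠ a j) (hs : ∀ j, s ≠ a j) :
    ∀ x : (Fin N → ℝ) × (Fin N → ℝ),
      stdPoisson (gaudinH N a r) (gaudinH N a s) x = 0 :=
  stmt4_general N a r s hr hs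
end

section
/- Let N ≥ 1, let a_1, …, a_N be pairwise distinct real numbers, and let (t_1, t_2) ∈ ℝ² with t_1 + a_j t_2 ≠ 0 for all j. Define z_1(p,q) = −∑_{j=1}^N p_j q_j/(t_1 + a_j t_2), z_2(p,q) = −(1/2) ∑_{j=1}^N q_j^2/(t_1 + a_j t_2), z_3(p,q) = (1/2) ∑_{j=1}^N p_j^2/(t_1 + a_j t_2). Then the weighted Poisson bracket with weights w_j = t_1 + a_j t_2 satisfies, identically on ℝ^N × ℝ^N: {z_1, z_2}^w = −2 z_2, {z_1, z_3}^w = 2 z_3, and {z_2, z_3}^w = −z_1 (i.e. (z_1, z_2, z_3) realizes the sl(2,ℝ) commutation relations, so the map (p,q) ↦ (z_1, z_2, z_3) is the moment map of the diagonal SL(2,ℝ)-action with respect to this bracket). -/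
open Finset

/-- The weighted Poisson bracket
`{f,g}^w(p,q) = ∑_j w_j (∂f/∂p_j ∂g/∂q_j − ∂f/∂q_j ∂g/∂p_j)` on `ℝ^N × ℝ^N`. -/
noncomputable def wPoisson {N : ℕ} (w : Fin N → ℝ)
    (f g : (Fin N → ℝ) × (Fin N → ℝ) → ℝ)
    (x : (Fin N → ℝ) × (Fin N → ℝ)) : ℝ :=
  ∑ j, w j * (pdP f j x * pdQ g j x - pdQ f j x * pdP g j x)

/-- `z₁(p,q) = −∑ p_j q_j/(t₁ + a_j t₂)`. -/
noncomputable def momZ₁ (N : ℕ) (a : Fin N → ℝ) (t₁ t₂ : ℝ)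
    (x : (Fin N → ℝ) × (Fin N → ℝ)) : ℝ :=
  -∑ j, x.1 j * x.2 j / (t₁ + a j * t₂)

/-- `z₂(p,q) = −(1/2)∑ q_j²/(t₁ + a_j t₂)`. -/
noncomputable def momZ₂ (N : ℕ) (a : Fin N → ℝ) (t₁ t₂ : ℝ)
    (x : (Fin N → ℝ) × (Fin N → ℝ)) : ℝ :=
  -(1 / 2) * ∑ j, (x.2 j) ^ 2 / (t₁ + a j * t₂)

/-- `z₃(p,q) = (1/2)∑ p_j²/(t₁ + a_j t₂)`. -/
noncomputable def momZ₃ (N : ℕ) (a : Fin N → ℝ) (t₁ t₂ : ℝ)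
    (x : (Fin N → ℝ) × (Fin N → ℝ)) : ℝ :=
  (1 / 2) * ∑ j, (x.1 j) ^ 2 / (t₁ + a j * t₂)

/-!
The partial derivatives of `z₁, z₂, z₃` are all of the form `±p_j/w_j` or `±q_j/w_j`. In each
term of the bracket the weight `w_j` cancels one factor `1/w_j`, so every bracket is again a sum of
quadratic monomials over `w_j`, and the three relations hold term by term, exactly as for
`pq, q², p²` under the unweighted bracket.
-/

lemma mul_div_mul_div_self {K : Type*} [Field K] (w u v : K) :
    w * (u / w * (v / w)) = u * v / w := by
  rcases eq_or_ne w 0 with rfl | hw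
  · simp
  · field_simp

section LinearForms

variable {E : Type*} [NormedAddCommGroup E] [NormedSpace ℝ E]

lemma ContinuousLinearMap.hasFDerivAt_mul_div (L M : E →L[ℝ] ℝ) (c : ℝ) (x : E) :
    HasFDerivAt (fun y => L y * M y / c) ((M x / c) • L + (L x / c) • M) x := by
  simp only [div_eq_mul_inv]
  refine ((L.hasFDerivAt.mul M.hasFDerivAt).mul_const c⁻¹).congr_fderiv ?_
  ext v
  simp only [add_apply, smul_apply, smul_eq_mul]
  ring

lemma ContinuousLinearMap.hasFDerivAt_sq_div (L : E →L[ℝ] ℝ) (c : ℝ) (x : E) :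
    HasFDerivAt (fun y => L y ^ 2 / c) ((2 * L x / c) • L) x := by
  simp only [div_eq_mul_inv]
  refine ((L.hasFDerivAt.pow 2).mul_const c⁻¹).congr_fderiv ?_
  ext v
  simp only [smul_apply, smul_eq_mul, nsmul_eq_mul]
  ring

end LinearForms

namespace WeightedPoisson

variable {N : ℕ}

noncomputable def coordP (j : Fin N) : (Fin N → ℝ) × (Fin N → ℝ) →L[ℝ] ℝ :=
  (ContinuousLinearMap.proj j).comp (ContinuousLinearMap.fst ℝ _ _)

noncomputable def coordQ (j : Fin N) : (Fin N → ℝ) × (Fin N → ℝ) →L[ℝ] ℝ :=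
  (ContinuousLinearMap.proj j).comp (ContinuousLinearMap.snd ℝ _ _)

@[simp]
lemma coordP_apply (j : Fin N) (v : (Fin N → ℝ) × (Fin N → ℝ)) : coordP j v = v.1 j := rfl

@[simp]
lemma coordQ_apply (j : Fin N) (v : (Fin N → ℝ) × (Fin N → ℝ)) : coordQ j v = v.2 j := rfl

variable (a : Fin N → ℝ) (t₁ t₂ : ℝ) (x : (Fin N → ℝ) × (Fin N → ℝ))

lemma hasFDerivAt_momZ₁ :
    HasFDerivAt (momZ₁ N a t₁ t₂)
      (-∑ k, ((x.2 k / (t₁ + a k * t₂)) • coordP k + (x.1 k / (t₁ + a k * t₂)) • coordQ k))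
      x :=
  (HasFDerivAt.fun_sum fun k _ => (coordP k).hasFDerivAt_mul_div (coordQ k) _ x).neg

lemma hasFDerivAt_momZ₂ :
    HasFDerivAt (momZ₂ N a t₁ t₂) (-∑ k, (x.2 k / (t₁ + a k * t₂)) • coordQ k) x := by
  refine ((HasFDerivAt.fun_sum fun k _ => (coordQ k).hasFDerivAt_sq_div _ x).const_mul _)
    |>.congr_fderiv ?_
  rw [Finset.smul_sum, ← Finset.sum_neg_distrib]
  refine sum_congr rfl fun k _ => ?_
  rw [coordQ_apply]
  module

lemma hasFDerivAt_momZ₃ :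
    HasFDerivAt (momZ₃ N a t₁ t₂) (∑ k, (x.1 k / (t₁ + a k * t₂)) • coordP k) x := by
  refine ((HasFDerivAt.fun_sum fun k _ => (coordP k).hasFDerivAt_sq_div _ x).const_mul _)
    |>.congr_fderiv ?_
  rw [Finset.smul_sum]
  refine sum_congr rfl fun k _ => ?_
  rw [coordP_apply]
  module

variable (j : Fin N)

lemma pdP_momZ₁ : pdP (momZ₁ N a t₁ t₂) j x = -(x.2 j / (t₁ + a j * t₂)) := by
  simp [pdP, (hasFDerivAt_momZ₁ a t₁ t₂ x).fderiv, Pi.single_apply]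

lemma pdQ_momZ₁ : pdQ (momZ₁ N a t₁ t₂) j x = -(x.1 j / (t₁ + a j * t₂)) := by
  simp [pdQ, (hasFDerivAt_momZ₁ a t₁ t₂ x).fderiv, Pi.single_apply]

lemma pdP_momZ₂ : pdP (momZ₂ N a t₁ t₂) j x = 0 := by
  simp [pdP, (hasFDerivAt_momZ₂ a t₁ t₂ x).fderiv]

lemma pdQ_momZ₂ : pdQ (momZ₂ N a t₁ t₂) j x = -(x.2 j / (t₁ + a j * t₂)) := by
  simp [pdQ, (hasFDerivAt_momZ₂ a t₁ t₂ x).fderiv, Pi.single_apply]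

lemma pdP_momZ₃ : pdP (momZ₃ N a t₁ t₂) j x = x.1 j / (t₁ + a j * t₂) := by
  simp [pdP, (hasFDerivAt_momZ₃ a t₁ t₂ x).fderiv, Pi.single_apply]

lemma pdQ_momZ₃ : pdQ (momZ₃ N a t₁ t₂) j x = 0 := by
  simp [pdQ, (hasFDerivAt_momZ₃ a t₁ t₂ x).fderiv]

lemma wPoisson_momZ₁_momZ₂ :
    wPoisson (fun j => t₁ + a j * t₂) (momZ₁ N a t₁ t₂) (momZ₂ N a t₁ t₂) x
      = -2 * momZ₂ N a t₁ t₂ x := by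
  simp only [wPoisson, pdP_momZ₁, pdQ_momZ₁, pdP_momZ₂, pdQ_momZ₂, momZ₂, Finset.mul_sum]
  exact sum_congr rfl fun j _ => by
    linear_combination mul_div_mul_div_self (t₁ + a j * t₂) (x.2 j) (x.2 j)

lemma wPoisson_momZ₁_momZ₃ :
    wPoisson (fun j => t₁ + a j * t₂) (momZ₁ N a t₁ t₂) (momZ₃ N a t₁ t₂) x
      = 2 * momZ₃ N a t₁ t₂ x := by
  simp only [wPoisson, pdP_momZ₁, pdQ_momZ₁, pdP_momZ₃, pdQ_momZ₃, momZ₃, Finset.mul_sum]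
  exact sum_congr rfl fun j _ => by
    linear_combination mul_div_mul_div_self (t₁ + a j * t₂) (x.1 j) (x.1 j)

lemma wPoisson_momZ₂_momZ₃ :
    wPoisson (fun j => t₁ + a j * t₂) (momZ₂ N a t₁ t₂) (momZ₃ N a t₁ t₂) x
      = -momZ₁ N a t₁ t₂ x := by
  simp only [wPoisson, pdP_momZ₂, pdQ_momZ₂, pdP_momZ₃, pdQ_momZ₃, momZ₁, neg_neg]
  exact sum_congr rfl fun j _ => by
    linear_combination mul_div_mul_div_self (t₁ + a j * t₂) (x.2 j) (x.1 j)

end WeightedPoisson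

open WeightedPoisson in
theorem stmt5_general (N : ℕ) (a : Fin N → ℝ) (t₁ t₂ : ℝ) :
    ∀ x : (Fin N → ℝ) × (Fin N → ℝ),
      wPoisson (fun j => t₁ + a j * t₂) (momZ₁ N a t₁ t₂) (momZ₂ N a t₁ t₂) x
          = -2 * momZ₂ N a t₁ t₂ x
      ∧ wPoisson (fun j => t₁ + a j * t₂) (momZ₁ N a t₁ t₂) (momZ₃ N a t₁ t₂) x
          = 2 * momZ₃ N a t₁ t₂ x
      ∧ wPoisson (fun j => t₁ + a j * t₂) (momZ₂ N a t₁ t₂) (momZ₃ N a t₁ t₂) x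
          = -momZ₁ N a t₁ t₂ x :=
  fun x => ⟨wPoisson_momZ₁_momZ₂ a t₁ t₂ x, wPoisson_momZ₁_momZ₃ a t₁ t₂ x,
    wPoisson_momZ₂_momZ₃ a t₁ t₂ x⟩

theorem stmt5 (N : ℕ) (hN : 1 ≤ N) (a : Fin N → ℝ) (ha : Function.Injective a)
    (t₁ t₂ : ℝ) (ht : ∀ j, t₁ + a j * t₂ ≠ 0) :
    ∀ x : (Fin N → ℝ) × (Fin N → ℝ),
      wPoisson (fun j => t₁ + a j * t₂) (momZ₁ N a t₁ t₂) (momZ₂ N a t₁ t₂) x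
          = -2 * momZ₂ N a t₁ t₂ x
      ∧ wPoisson (fun j => t₁ + a j * t₂) (momZ₁ N a t₁ t₂) (momZ₃ N a t₁ t₂) x
          = 2 * momZ₃ N a t₁ t₂ x
      ∧ wPoisson (fun j => t₁ + a j * t₂) (momZ₂ N a t₁ t₂) (momZ₃ N a t₁ t₂) x
          = -momZ₁ N a t₁ t₂ x :=
  stmt5_general N a t₁ t₂
end
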